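/- Let V be an acyclic left ℤ[Γ^J]-module and v ∈ V. Then (E−T)v ∈ (E−S)V if and only if v ∈ (E+T+T²+T³)V + (E+U+U²+U³+U⁴+U⁵)V. -/

import Mathlib

open Matrix

abbrev SL2Z := Matrix.SpecialLinearGroup (Fin 2) ℤ

/-- The Jacobi group `SL₂(ℤ) ⋉ ℤ²`: pairs `[M,(λ,μ)]`. -/
@[ext]
structure GammaJ where
  M : SL2Z
  X : Fin 2 → ℤ

namespace GammaJ

instance : Mul GammaJ :=
  ⟨fun g h => ⟨g.M * h.M, Matrix.vecMul g.X (h.M : Matrix (Fin 2) (Fin 2) ℤ) + h.X⟩⟩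

instance : One GammaJ := ⟨⟨1, 0⟩⟩

instance : Inv GammaJ :=
  ⟨fun g => ⟨g.M⁻¹, -(Matrix.vecMul g.X ((g.M⁻¹ : SL2Z) : Matrix (Fin 2) (Fin 2) ℤ))⟩⟩

@[simp] lemma mul_M (g h : GammaJ) : (g * h).M = g.M * h.M := rfl
@[simp] lemma mul_X (g h : GammaJ) :
    (g * h).X = Matrix.vecMul g.X (h.M : Matrix (Fin 2) (Fin 2) ℤ) + h.X := rfl
@[simp] lemma one_M : (1 : GammaJ).M = 1 := rfl
@[simp] lemma one_X : (1 : GammaJ).X = 0 := rfl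
@[simp] lemma inv_M (g : GammaJ) : g⁻¹.M = g.M⁻¹ := rfl
@[simp] lemma inv_X (g : GammaJ) :
    g⁻¹.X = -(Matrix.vecMul g.X ((g.M⁻¹ : SL2Z) : Matrix (Fin 2) (Fin 2) ℤ)) := rfl

instance : Group GammaJ where
  mul_assoc a b c := by
    ext : 1
    · exact mul_assoc a.M b.M c.M
    · show Matrix.vecMul (Matrix.vecMul a.X _ + b.X) _ + c.X
        = Matrix.vecMul a.X ((b.M * c.M : SL2Z) : Matrix (Fin 2) (Fin 2) ℤ) + _
      simp [Matrix.add_vecMul, Matrix.vecMul_vecMul, add_assoc]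
  one_mul a := by
    ext : 1
    · exact one_mul a.M
    · simp
  mul_one a := by
    ext : 1
    · exact mul_one a.M
    · simp
  inv_mul_cancel a := by
    ext : 1
    · exact inv_mul_cancel a.M
    · show Matrix.vecMul (-(Matrix.vecMul a.X _)) _ + a.X = 0
      simp [Matrix.neg_vecMul, Matrix.vecMul_vecMul, Matrix.adjugate_mul,
        Matrix.SpecialLinearGroup.det_coe]

def S : GammaJ := ⟨⟨!![1, 1; 0, 1], by norm_num [Matrix.det_fin_two_of]⟩, ![0, 0]⟩
def T : GammaJ := ⟨⟨!![0, -1; 1, 0], by norm_num [Matrix.det_fin_two_of]⟩, ![1, 0]⟩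
def U : GammaJ := ⟨⟨!![1, -1; 1, 0], by norm_num [Matrix.det_fin_two_of]⟩, ![1, 0]⟩
def E : GammaJ := 1
def I₁ : GammaJ := ⟨1, ![0, 1]⟩
def I₂ : GammaJ := ⟨1, ![1, 0]⟩

end GammaJ

namespace GammaJ

/-- The image of a group element in the integral group ring `ℤ[Γ^J]`. -/
noncomputable def of (γ : GammaJ) : MonoidAlgebra ℤ GammaJ := MonoidAlgebra.of ℤ GammaJ γ

/-- The element `E + T + T² + T³` of `ℤ[Γ^J]`. -/
noncomputable def sigmaT : MonoidAlgebra ℤ GammaJ := of E + of T + of T ^ 2 + of T ^ 3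

/-- The element `E + U + U² + U³ + U⁴ + U⁵` of `ℤ[Γ^J]`. -/
noncomputable def sigmaU : MonoidAlgebra ℤ GammaJ :=
  of E + of U + of U ^ 2 + of U ^ 3 + of U ^ 4 + of U ^ 5

end GammaJ

/-- A left `ℤ[Γ^J]`-module `V` is *acyclic* if
(a) `Ker(E+T+T²+T³) ∩ Ker(E+U+⋯+U⁵) = {0}`,
(b) `Ker(E−T) = Im(E+T+T²+T³)`, and (c) `Ker(E−U) = Im(E+U+⋯+U⁵)`. -/
def GammaJ.IsAcyclic (V : Type*) [AddCommGroup V]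
    [Module (MonoidAlgebra ℤ GammaJ) V] : Prop :=
  (∀ v : V, GammaJ.sigmaT • v = 0 → GammaJ.sigmaU • v = 0 → v = 0) ∧
  (∀ v : V, GammaJ.of GammaJ.T • v = v ↔ ∃ w : V, v = GammaJ.sigmaT • w) ∧
  (∀ v : V, GammaJ.of GammaJ.U • v = v ↔ ∃ w : V, v = GammaJ.sigmaU • w)


namespace GammaJ

lemma T_mul_pow : T*T*T*T = 1 := by
  ext : 1
  · exact Subtype.ext (by ext i j; fin_cases i <;> fin_cases j <;> rfl)
  · simp [T, Matrix.vecMul, dotProduct, Matrix.mul_fin_two]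

lemma U_mul_pow : U*U*U*U*U*U = 1 := by
  ext : 1
  · exact Subtype.ext (by ext i j; fin_cases i <;> fin_cases j <;> rfl)
  · simp [U, Matrix.vecMul, dotProduct, Matrix.mul_fin_two]

lemma S_mul_T : S * T = U := by
  ext : 1
  · exact Subtype.ext (by ext i j; fin_cases i <;> fin_cases j <;> rfl)
  · simp [S, T, U, Matrix.vecMul, dotProduct]

lemma T_pow_four : (T : GammaJ) ^ 4 = 1 := by
  rw [pow_succ, pow_succ, pow_succ, pow_one]; exact T_mul_pow

lemma U_pow_six : (U : GammaJ) ^ 6 = 1 := by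
  rw [pow_succ, pow_succ, pow_succ, pow_succ, pow_succ, pow_one]; exact U_mul_pow

lemma of_one' : of (1 : GammaJ) = 1 := by unfold of; exact map_one _

lemma of_E : of E = 1 := of_one'

lemma of_mul' (g h : GammaJ) : of (g * h) = of g * of h := by unfold of; exact map_mul _ _ _

lemma of_pow' (g : GammaJ) (n : ℕ) : of g ^ n = of (g ^ n) := by
  unfold of; exact (map_pow _ _ _).symm

lemma ofT_pow_four : (of T) ^ 4 = 1 := by rw [of_pow', T_pow_four, of_one']

lemma ofU_pow_six : (of U) ^ 6 = 1 := by rw [of_pow', U_pow_six, of_one']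

lemma ofS_mul_ofT : of S * of T = of U := by rw [← of_mul', S_mul_T]

lemma sigmaT_eq : sigmaT = 1 + of T + of T ^ 2 + of T ^ 3 := by
  simp only [sigmaT, of_E]

lemma sigmaU_eq : sigmaU = 1 + of U + of U ^ 2 + of U ^ 3 + of U ^ 4 + of U ^ 5 := by
  simp only [sigmaU, of_E]

lemma sigmaT_mul : sigmaT * (1 - of T) = 0 := by
  rw [sigmaT_eq]
  have h : (1 + of T + of T ^ 2 + of T ^ 3) * (1 - of T) = 1 - of T ^ 4 := by noncomm_ring
  rw [h, ofT_pow_four, sub_self]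

lemma mul_sigmaT : (1 - of T) * sigmaT = 0 := by
  rw [sigmaT_eq]
  have h : (1 - of T) * (1 + of T + of T ^ 2 + of T ^ 3) = 1 - of T ^ 4 := by noncomm_ring
  rw [h, ofT_pow_four, sub_self]

lemma sigmaU_mul : sigmaU * (1 - of U) = 0 := by
  rw [sigmaU_eq]
  have h : (1 + of U + of U ^ 2 + of U ^ 3 + of U ^ 4 + of U ^ 5) * (1 - of U)
      = 1 - of U ^ 6 := by noncomm_ring
  rw [h, ofU_pow_six, sub_self]

lemma ofU_mul_sigmaU : of U * sigmaU = sigmaU := by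
  rw [sigmaU_eq]
  have h : of U * (1 + of U + of U ^ 2 + of U ^ 3 + of U ^ 4 + of U ^ 5)
      = (1 + of U + of U ^ 2 + of U ^ 3 + of U ^ 4 + of U ^ 5) + (of U ^ 6 - 1) := by
    noncomm_ring
  rw [h, ofU_pow_six, sub_self, add_zero]

end GammaJ

/-- Let `V` be an acyclic left `ℤ[Γ^J]`-module and `v ∈ V`. Then
`(E−T)v ∈ (E−S)V` if and only if `v ∈ (E+T+T²+T³)V + (E+U+U²+U³+U⁴+U⁵)V`. -/
theorem GammaJ.one_sub_T_smul_mem_iff {V : Type*} [AddCommGroup V]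
    [Module (MonoidAlgebra ℤ GammaJ) V] (hV : GammaJ.IsAcyclic V) (v : V) :
    (∃ w : V, (GammaJ.of GammaJ.E - GammaJ.of GammaJ.T) • v =
        (GammaJ.of GammaJ.E - GammaJ.of GammaJ.S) • w) ↔
      (∃ x y : V, v = GammaJ.sigmaT • x + GammaJ.sigmaU • y) := by
  obtain ⟨ha, hb, hc⟩ := hV
  rw [of_E]
  constructor
  · rintro ⟨w, hw⟩
    obtain ⟨w', hw'def⟩ : ∃ w' : V, w' = (of T) ^ 3 • w := ⟨_, rfl⟩
    have h14 : of T * (of T) ^ 3 = 1 := by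
      have h : of T * (of T) ^ 3 = (of T) ^ 4 := by noncomm_ring
      rw [h, ofT_pow_four]
    have htw : of T • w' = w := by
      rw [hw'def, smul_smul, h14, one_smul]
    have h2 : (1 - of S) • w = of T • w' - of U • w' := by
      rw [sub_smul, one_smul, ← htw, smul_smul, ofS_mul_ofT]
    have key : (1 - of T) • (v + w') = (1 - of U) • w' := by
      have e1 : (1 - of T) • (v + w') = (1 - of T) • v + (w' - of T • w') := by
        rw [smul_add, sub_smul, sub_smul, one_smul, one_smul]
      rw [e1, hw, h2, sub_smul, one_smul]
      abel
    have hc0 : (1 - of U) • w' = 0 := by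
      refine ha _ ?_ ?_
      · rw [← key, smul_smul, sigmaT_mul, zero_smul]
      · rw [smul_smul, sigmaU_mul, zero_smul]
    have hfixU : of U • w' = w' := by
      have h := hc0
      rw [sub_smul, one_smul, sub_eq_zero] at h
      exact h.symm
    have hfixT : of T • (v + w') = v + w' := by
      have h := key.trans hc0
      rw [sub_smul, one_smul, sub_eq_zero] at h
      exact h.symm
    obtain ⟨x, hx⟩ := (hb (v + w')).mp hfixT
    obtain ⟨y, hy⟩ := (hc w').mp hfixU
    refine ⟨x, -y, ?_⟩
    rw [smul_neg, ← hy, ← hx]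
    abel
  · rintro ⟨x, y, rfl⟩
    refine ⟨-(of T • (sigmaU • y)), ?_⟩
    have e1 : (1 - of T) • (sigmaT • x + sigmaU • y) = ((1 - of T) * sigmaU) • y := by
      rw [smul_add, smul_smul, smul_smul, mul_sigmaT, zero_smul, zero_add]
    have e2 : (1 - of S) • -(of T • (sigmaU • y)) = ((1 - of T) * sigmaU) • y := by
      rw [smul_neg, smul_smul, smul_smul]
      have hq : (1 - of S) * of T * sigmaU = -((1 - of T) * sigmaU) := by
        have h : (1 - of S) * of T * sigmaU = of T * sigmaU - of S * of T * sigmaU := by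
          noncomm_ring
        rw [h, ofS_mul_ofT, ofU_mul_sigmaU, sub_mul, one_mul, neg_sub]
      rw [hq, neg_smul, neg_neg]
    rw [e1, e2]
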